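/- Fix N ≥ 1, ν ∈ {1,…,N}, and a compact set 𝒦 ⊂ ℂ. Then there exist q ∈ (0,1), a constant C > 0, and M_0 ≥ 1 such that for all M ≥ M_0 and all w ∈ 𝒦: | Q_N^{(M)}(ν + w/M) − binom(N, ν−1) (−1)^{ν−1} ((ν + w/M)^{ν−1}/(ν−1)!)^M · (1 − ((N+1−ν)/ν)(1 + w/(νM))^M) | ≤ C q^M · | binom(N, ν−1) ((ν + w/M)^{ν−1}/(ν−1)!)^M |. -/

import Mathlib

open Finset

/-!
Write `u = ν + w/M` and `s = ν - 1`. For `M` large, `|u - ν| ≤ 1/4`, so `|u|` lies in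
`[s + 3/4, s + 5/4]`, and there the sequence `|u|^k / k!` peaks at `k = s` and `k = s + 1`:
every other term is at most `q` times the one at `k = s`, with `q < 1` depending only on `s`.
After raising to the power `M`, the terms `k ≠ s, s + 1` of `Q_N^{(M)}(u)` are thus `O(q^M)`
relative to the `k = s` term, while the terms `k = s` and `k = s + 1` add up exactly to the
main term, because `C(N, s+1)/C(N, s) = (N - s)/(s + 1)` and `u/ν = 1 + w/(νM)`.
-/

noncomputable def Qpoly (N M : ℕ) (u : ℂ) : ℂ :=
  ∑ k ∈ Finset.range (N + 1), (N.choose k : ℂ) * (-1) ^ k * (u ^ k / (k.factorial : ℂ)) ^ M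

lemma pow_succ_div_factorial_succ {K : Type*} [Field K] (t : K) (k : ℕ) :
    t ^ (k + 1) / ((k + 1).factorial : K) = t ^ k / (k.factorial : K) * (t / ((k : K) + 1)) := by
  rw [Nat.factorial_succ, Nat.cast_mul, pow_succ, div_mul_div_comm, mul_comm (k.factorial : K),
    Nat.cast_succ]

lemma pow_div_factorial_le_of_le {t : ℝ} (ht : 0 ≤ t) {k m : ℕ} (hkm : k ≤ m)
    (hmt : (m : ℝ) ≤ t) : t ^ k / k.factorial ≤ t ^ m / m.factorial := by
  induction m, hkm using Nat.le_induction with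
  | base => rfl
  | succ m _ ih =>
    push_cast at hmt
    rw [pow_succ_div_factorial_succ]
    have hratio : 1 ≤ t / ((m : ℝ) + 1) := by rw [one_le_div (by positivity)]; exact hmt
    exact (ih (by linarith)).trans (le_mul_of_one_le_right (by positivity) hratio)

lemma pow_div_factorial_le_of_ge {t : ℝ} (ht : 0 ≤ t) {k m : ℕ} (hkm : k ≤ m)
    (htk : t ≤ k + 1) : t ^ m / m.factorial ≤ t ^ k / k.factorial := by
  induction m, hkm using Nat.le_induction with
  | base => rfl
  | succ m hkm ih =>
    rw [pow_succ_div_factorial_succ]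
    have hkm' : (k : ℝ) ≤ m := by exact_mod_cast hkm
    have hratio : t / ((m : ℝ) + 1) ≤ 1 := div_le_one_of_le₀ (by linarith) (by positivity)
    exact (mul_le_of_le_one_right (by positivity) hratio).trans ih

/-- For `a k = t ^ k / k!` with `s + 3/4 ≤ t ≤ s + 5/4`, the two entries bound
`a (s - 1) / a s = s / t` and `a (s + 2) / a s = t ^ 2 / ((s + 1) (s + 2))`. -/
noncomputable def peakRatio (s : ℕ) : ℝ :=
  max (s / (s + 3 / 4)) ((s + 5 / 4) ^ 2 / ((s + 1) * (s + 2)))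

lemma peakRatio_pos (s : ℕ) : 0 < peakRatio s :=
  lt_max_of_lt_right (by positivity)

lemma peakRatio_lt_one (s : ℕ) : peakRatio s < 1 := by
  have hs : (0 : ℝ) ≤ s := s.cast_nonneg
  refine max_lt ?_ ?_ <;> rw [div_lt_one (by positivity)] <;> nlinarith

lemma pow_div_factorial_le_peakRatio_mul {s k : ℕ} {t : ℝ} (ht₁ : s + 3 / 4 ≤ t)
    (ht₂ : t ≤ s + 5 / 4) (hks : k ≠ s) (hks' : k ≠ s + 1) :
    t ^ k / k.factorial ≤ peakRatio s * (t ^ s / s.factorial) := by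
  have hs : (0 : ℝ) ≤ s := s.cast_nonneg
  have ht : 0 < t := by linarith
  rcases hks.lt_or_gt with hlt | hgt
  · obtain ⟨j, rfl⟩ : ∃ j, s = j + 1 := ⟨s - 1, by omega⟩
    push_cast at ht₁ ⊢
    rw [pow_succ_div_factorial_succ]
    have hj : ((j : ℝ) + 1) / t ≤ peakRatio (j + 1) := by
      refine le_trans ?_ (le_max_left _ _)
      push_cast
      exact div_le_div_of_nonneg_left (by positivity) (by positivity) ht₁
    calc t ^ k / k.factorial ≤ t ^ j / j.factorial :=
          pow_div_factorial_le_of_le ht.le (by omega) (by linarith)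
      _ = ((j : ℝ) + 1) / t * (t ^ j / j.factorial * (t / ((j : ℝ) + 1))) := by
          field_simp
      _ ≤ peakRatio (j + 1) * (t ^ j / j.factorial * (t / ((j : ℝ) + 1))) := by gcongr
  · have hdecay : t ^ k / k.factorial ≤ t ^ (s + 2) / (s + 2).factorial :=
      pow_div_factorial_le_of_ge ht.le (by omega) (by push_cast; linarith)
    rw [pow_succ_div_factorial_succ, pow_succ_div_factorial_succ] at hdecay
    have hq : t ^ 2 / ((s + 1) * (s + 2)) ≤ peakRatio s := by
      refine le_trans ?_ (le_max_right _ _)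
      gcongr
    calc t ^ k / k.factorial
        ≤ t ^ s / s.factorial * (t / ((s : ℝ) + 1)) * (t / (((s + 1 : ℕ) : ℝ) + 1)) :=
          hdecay
      _ = t ^ 2 / ((s + 1) * (s + 2)) * (t ^ s / s.factorial) := by
          push_cast; field_simp; ring
      _ ≤ peakRatio s * (t ^ s / s.factorial) := by gcongr

noncomputable def Qterm (N M : ℕ) (u : ℂ) (k : ℕ) : ℂ :=
  (N.choose k : ℂ) * (-1) ^ k * (u ^ k / (k.factorial : ℂ)) ^ M

lemma norm_Qterm (N M : ℕ) (u : ℂ) (k : ℕ) :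
    ‖Qterm N M u k‖ = N.choose k * (‖u‖ ^ k / k.factorial) ^ M := by
  simp [Qterm, norm_pow]

lemma Qpoly_eq_sum_sdiff_add {N s : ℕ} (hsN : s + 1 ≤ N) (M : ℕ) (u : ℂ) :
    Qpoly N M u = ∑ k ∈ range (N + 1) \ {s, s + 1}, Qterm N M u k
      + (Qterm N M u s + Qterm N M u (s + 1)) := by
  have hpair : {s, s + 1} ⊆ range (N + 1) := by
    intro k hk
    simp only [mem_insert, mem_singleton] at hk
    rw [mem_range]
    omega
  rw [← sum_pair (by omega : s ≠ s + 1), sum_sdiff hpair]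
  rfl

lemma Qterm_add_Qterm_succ (N M s : ℕ) (u : ℂ) :
    Qterm N M u s + Qterm N M u (s + 1) =
      (N.choose s : ℂ) * (-1) ^ s * (u ^ s / (s.factorial : ℂ)) ^ M *
        (1 - ((N - s : ℕ) : ℂ) / ((s + 1 : ℕ) : ℂ) * (u / ((s + 1 : ℕ) : ℂ)) ^ M) := by
  have hchoose :
      (N.choose (s + 1) : ℂ) = N.choose s * ((N - s : ℕ) : ℂ) / ((s + 1 : ℕ) : ℂ) := by
    rw [eq_div_iff (Nat.cast_ne_zero.mpr s.succ_ne_zero)]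
    exact_mod_cast Nat.choose_succ_right_eq N s
  rw [Qterm, Qterm, pow_succ_div_factorial_succ, ← Nat.cast_succ, hchoose]
  ring

lemma norm_sum_Qterm_sdiff_le {N M s : ℕ} {u : ℂ} (hsN : s ≤ N) (h₁ : s + 3 / 4 ≤ ‖u‖)
    (h₂ : ‖u‖ ≤ s + 5 / 4) :
    ‖∑ k ∈ range (N + 1) \ {s, s + 1}, Qterm N M u k‖ ≤
      2 ^ N * peakRatio s ^ M * ‖(N.choose s : ℂ) * (u ^ s / (s.factorial : ℂ)) ^ M‖ := by
  set a : ℝ := ‖u‖ ^ s / s.factorial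
  have hterm : ∀ k ∈ range (N + 1) \ {s, s + 1},
      ‖Qterm N M u k‖ ≤ N.choose k * (peakRatio s ^ M * a ^ M) := by
    intro k hk
    simp only [mem_sdiff, mem_insert, mem_singleton, not_or] at hk
    rw [norm_Qterm, ← mul_pow]
    gcongr
    exact pow_div_factorial_le_peakRatio_mul h₁ h₂ hk.2.1 hk.2.2
  have hchoose_sum : ∑ k ∈ range (N + 1) \ {s, s + 1}, (N.choose k : ℝ) ≤ 2 ^ N := by
    calc ∑ k ∈ range (N + 1) \ {s, s + 1}, (N.choose k : ℝ)
        ≤ ∑ k ∈ range (N + 1), (N.choose k : ℝ) :=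
          sum_le_sum_of_subset_of_nonneg sdiff_subset (by simp)
      _ = 2 ^ N := by exact_mod_cast Nat.sum_range_choose N
  have hchoose_pos : (1 : ℝ) ≤ N.choose s := by exact_mod_cast Nat.choose_pos hsN
  have hq := (peakRatio_pos s).le
  calc ‖∑ k ∈ range (N + 1) \ {s, s + 1}, Qterm N M u k‖
      ≤ ∑ k ∈ range (N + 1) \ {s, s + 1}, N.choose k * (peakRatio s ^ M * a ^ M) :=
        (norm_sum_le _ _).trans (sum_le_sum hterm)
    _ ≤ 2 ^ N * (peakRatio s ^ M * a ^ M) := by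
        rw [← sum_mul]
        gcongr
    _ ≤ 2 ^ N * peakRatio s ^ M * (N.choose s * a ^ M) := by
        rw [mul_assoc]
        gcongr
        exact le_mul_of_one_le_left (by positivity) hchoose_pos
    _ = 2 ^ N * peakRatio s ^ M * ‖(N.choose s : ℂ) * (u ^ s / (s.factorial : ℂ)) ^ M‖ := by
        simp [a, norm_pow]

lemma norm_natCast_succ_add_mem (s : ℕ) {z : ℂ} (hz : ‖z‖ ≤ 1 / 4) :
    s + 3 / 4 ≤ ‖((s + 1 : ℕ) : ℂ) + z‖ ∧
      ‖((s + 1 : ℕ) : ℂ) + z‖ ≤ s + 5 / 4 := by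
  have hs : ‖((s + 1 : ℕ) : ℂ)‖ = s + 1 := by rw [Complex.norm_natCast]; push_cast; ring
  constructor
  · have := norm_sub_le (((s + 1 : ℕ) : ℂ) + z) z
    rw [add_sub_cancel_right] at this
    linarith
  · linarith [norm_add_le ((s + 1 : ℕ) : ℂ) z]

theorem Qpoly_local_asymptotics_general
    (N ν : ℕ) (hν1 : 1 ≤ ν) (hνN : ν ≤ N)
    (𝒦 : Set ℂ) (h𝒦 : IsCompact 𝒦) :
    ∃ q : ℝ, q ∈ Set.Ioo (0 : ℝ) 1 ∧ ∃ C : ℝ, 0 < C ∧ ∃ M₀ : ℕ, 1 ≤ M₀ ∧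
      ∀ M : ℕ, M₀ ≤ M → ∀ w ∈ 𝒦,
        ‖Qpoly N M ((ν : ℂ) + w / M) -
            (N.choose (ν - 1) : ℂ) * (-1) ^ (ν - 1) *
              (((ν : ℂ) + w / M) ^ (ν - 1) / ((ν - 1).factorial : ℂ)) ^ M *
              (1 - ((N + 1 - ν : ℕ) : ℂ) / (ν : ℂ) * (1 + w / ((ν : ℂ) * M)) ^ M)‖
          ≤ C * q ^ M *
            ‖(N.choose (ν - 1) : ℂ) *
              (((ν : ℂ) + w / M) ^ (ν - 1) / ((ν - 1).factorial : ℂ)) ^ M‖ := by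
  obtain ⟨s, rfl⟩ : ∃ s, ν = s + 1 := ⟨ν - 1, by omega⟩
  obtain ⟨R, hR⟩ := h𝒦.isBounded.exists_norm_le
  refine ⟨peakRatio s, ⟨peakRatio_pos s, peakRatio_lt_one s⟩, 2 ^ N, by positivity,
    4 * ⌈R⌉₊ + 1, by omega, fun M hM w hw => ?_⟩
  have hM : (4 * ⌈R⌉₊ + 1 : ℝ) ≤ M := by exact_mod_cast hM
  have hMpos : (0 : ℝ) < M := lt_of_lt_of_le (by positivity) hM
  have hwM : ‖w / M‖ ≤ 1 / 4 := by
    rw [norm_div, Complex.norm_natCast, div_le_iff₀ hMpos]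
    linarith [hR w hw, Nat.le_ceil R]
  obtain ⟨h₁, h₂⟩ := norm_natCast_succ_add_mem s hwM
  have hscale : 1 + w / (((s + 1 : ℕ) : ℂ) * M) =
      (((s + 1 : ℕ) : ℂ) + w / M) / ((s + 1 : ℕ) : ℂ) := by
    field_simp
  rw [Nat.add_sub_cancel, Nat.add_sub_add_right, hscale, ← Qterm_add_Qterm_succ,
    Qpoly_eq_sum_sdiff_add hνN, add_sub_cancel_right]
  exact norm_sum_Qterm_sdiff_le (by omega) h₁ h₂

/-- **Proposition 6 (local asymptotics near `u = ν` at scale `1/M`):** for fixed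
`ν ∈ {1,…,N}` and a compact set `𝒦 ⊂ ℂ`, there are `q ∈ (0,1)`, `C > 0` and `M₀` such that
for all `M ≥ M₀` and `w ∈ 𝒦`,
`|Q_N^{(M)}(ν + w/M) − C(N,ν−1)(−1)^{ν−1}((ν+w/M)^{ν−1}/(ν−1)!)^M
  (1 − ((N+1−ν)/ν)(1 + w/(νM))^M)| ≤ C q^M |C(N,ν−1)((ν+w/M)^{ν−1}/(ν−1)!)^M|`. -/
theorem Qpoly_local_asymptotics
    (N ν : ℕ) (hN : 1 ≤ N) (hν1 : 1 ≤ ν) (hνN : ν ≤ N)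
    (𝒦 : Set ℂ) (h𝒦 : IsCompact 𝒦) :
    ∃ q : ℝ, q ∈ Set.Ioo (0 : ℝ) 1 ∧ ∃ C : ℝ, 0 < C ∧ ∃ M₀ : ℕ, 1 ≤ M₀ ∧
      ∀ M : ℕ, M₀ ≤ M → ∀ w ∈ 𝒦,
        ‖Qpoly N M ((ν : ℂ) + w / M) -
            (N.choose (ν - 1) : ℂ) * (-1) ^ (ν - 1) *
              (((ν : ℂ) + w / M) ^ (ν - 1) / ((ν - 1).factorial : ℂ)) ^ M *
              (1 - ((N + 1 - ν : ℕ) : ℂ) / (ν : ℂ) * (1 + w / ((ν : ℂ) * M)) ^ M)‖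
          ≤ C * q ^ M *
            ‖(N.choose (ν - 1) : ℂ) *
              (((ν : ℂ) + w / M) ^ (ν - 1) / ((ν - 1).factorial : ℂ)) ^ M‖ :=
  Qpoly_local_asymptotics_general N ν hν1 hνN 𝒦 h𝒦
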